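/- Let (A_j)_{j ∈ J} be a family of associative rings and let A = Π_{j ∈ J} A_j be their product ring (with componentwise operations). Suppose that for each j ∈ J, every 2-local inner derivation on A_j is a derivation (additive and satisfying the Leibniz rule). Then every 2-local inner derivation Δ : A → A is a derivation: Δ is additive and Δ(x·y) = Δ(x)·y + x·Δ(y) for all x, y ∈ A. -/

import Mathlib

/-!
A 2-local inner derivation `Δ` of a product `∏ A j` acts componentwise: comparing `x` and `y`
through a common implementing element `a` gives `Δ x j = a j * x j - x j * a j = Δ y j` whenever
`x j = y j`. Hence `Δ x j` depends only on `x j`, through the map `u ↦ Δ (Pi.single j u) j`, which is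
again a 2-local inner derivation of `A j`, hence a derivation; a map that is a derivation in every
component is a derivation.
-/

def IsTwoLocalInnerDerivation {R : Type*} [Mul R] [Sub R] (Δ : R → R) : Prop :=
  ∀ x y : R, ∃ a : R, Δ x = a * x - x * a ∧ Δ y = a * y - y * a

def IsDerivation {R : Type*} [Add R] [Mul R] (D : R → R) : Prop :=
  (∀ x y : R, D (x + y) = D x + D y) ∧ (∀ x y : R, D (x * y) = D x * y + x * D y)

section Pi

variable {J : Type*} {A : J → Type*} [∀ j, NonUnitalNonAssocRing (A j)]

theorem IsDerivation.pi_of_apply_eq {D : (∀ j, A j) → ∀ j, A j} {d : ∀ j, A j → A j}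
    (hd : ∀ j, IsDerivation (d j)) (hD : ∀ x j, D x j = d j (x j)) : IsDerivation D := by
  constructor
  · intro x y
    funext j
    simp only [hD, Pi.add_apply, (hd j).1]
  · intro x y
    funext j
    simp only [hD, Pi.add_apply, Pi.mul_apply, (hd j).2]

variable {Δ : (∀ j, A j) → ∀ j, A j}

theorem IsTwoLocalInnerDerivation.apply_eq_of_apply_eq (hΔ : IsTwoLocalInnerDerivation Δ)
    {x y : ∀ j, A j} {j : J} (hxy : x j = y j) : Δ x j = Δ y j := by
  obtain ⟨a, hx, hy⟩ := hΔ x y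
  simp only [hx, hy, Pi.sub_apply, Pi.mul_apply, hxy]

variable [DecidableEq J]

def piComponent (D : (∀ j, A j) → ∀ j, A j) (j : J) (u : A j) : A j :=
  D (Pi.single j u) j

theorem IsTwoLocalInnerDerivation.apply_eq_piComponent (hΔ : IsTwoLocalInnerDerivation Δ)
    (x : ∀ j, A j) (j : J) : Δ x j = piComponent Δ j (x j) :=
  hΔ.apply_eq_of_apply_eq (Pi.single_eq_same j (x j)).symm

theorem IsTwoLocalInnerDerivation.isTwoLocalInnerDerivation_piComponent
    (hΔ : IsTwoLocalInnerDerivation Δ) (j : J) : IsTwoLocalInnerDerivation (piComponent Δ j) := by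
  intro u v
  obtain ⟨a, hu, hv⟩ := hΔ (Pi.single j u) (Pi.single j v)
  refine ⟨a j, ?_, ?_⟩
  · simpa only [piComponent, Pi.sub_apply, Pi.mul_apply, Pi.single_eq_same] using
      congrFun hu j
  · simpa only [piComponent, Pi.sub_apply, Pi.mul_apply, Pi.single_eq_same] using
      congrFun hv j

end Pi

/-- If on each factor of a product of associative rings every 2-local inner
derivation is a derivation, then every 2-local inner derivation on the product
ring is a derivation. -/
theorem twoLocal_inner_derivation_product
    (J : Type*) (A : J → Type*) [∀ j, Ring (A j)]
    (hfactor : ∀ j : J, ∀ Δj : A j → A j,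
      (∀ u v : A j, ∃ b : A j, Δj u = b * u - u * b ∧ Δj v = b * v - v * b) →
      (∀ u v : A j, Δj (u + v) = Δj u + Δj v) ∧
      (∀ u v : A j, Δj (u * v) = Δj u * v + u * Δj v))
    (Δ : (∀ j, A j) → (∀ j, A j))
    (h2loc : ∀ x y : ∀ j, A j, ∃ a : ∀ j, A j,
      Δ x = a * x - x * a ∧ Δ y = a * y - y * a) :
    (∀ x y : ∀ j, A j, Δ (x + y) = Δ x + Δ y) ∧
    (∀ x y : ∀ j, A j, Δ (x * y) = Δ x * y + x * Δ y) := by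
  classical
  have hΔ : IsTwoLocalInnerDerivation Δ := h2loc
  exact IsDerivation.pi_of_apply_eq (fun j => hfactor j _ (hΔ.isTwoLocalInnerDerivation_piComponent j))
    hΔ.apply_eq_piComponent
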